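/- arXiv:1612.02884 — 2 statements merged into one kernel-verified Lean document; each statement's English description precedes it below -/
import Mathlib

section
/- Let (δ₁,…,δ_k) be a minimal transitive factorization of σ ∈ S_n into 3-cycles, write δ₁ = (j₃ j₂ j₁) and σ' = δ₂⋯δ_k = δ₁⁻¹σ. Suppose j₂ and j₃ lie in a common cycle of σ and j₁ lies in a different cycle of σ (with σ of the form (j₁…)(j₂…j₃…)⋯). Then: in σ' the points j₁ and j₂ lie in a common cycle and j₃ lies in a different cycle; the subgroup generated by {δ₂,…,δ_k} has exactly two orbits on {1,…,n}, one containing j₁ and j₂ and the other containing j₃; and for each of these two orbits X, the sub-tuple of (δ₂,…,δ_k) consisting of those δᵢ that move some point of X is (after restriction to X) a minimal transitive factorization of the restriction of σ' to X into 3-cycles of the symmetric group on X. -/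
open Equiv

open scoped Classical

/-- The subgroup generated by the entries of `L` acts transitively on `Fin n`. -/
def IsTransitiveFamily {n : ℕ} (L : List (Perm (Fin n))) : Prop :=
  ∀ x y : Fin n, ∃ g ∈ Subgroup.closure {τ | τ ∈ L}, g x = y

/-- `L` is a transitive factorization of `σ` into 3-cycles. -/
def IsTransFact3 {n : ℕ} (σ : Perm (Fin n)) (L : List (Perm (Fin n))) : Prop :=
  (∀ δ ∈ L, δ.IsThreeCycle) ∧ L.prod = σ ∧ IsTransitiveFamily L

/-- `L` is a minimal transitive factorization of `σ` into 3-cycles. -/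
def IsMinTransFact3 {n : ℕ} (σ : Perm (Fin n)) (L : List (Perm (Fin n))) : Prop :=
  IsTransFact3 σ L ∧ ∀ L' : List (Perm (Fin n)), IsTransFact3 σ L' → L.length ≤ L'.length

/-- The orbit of `x` under the subgroup generated by the entries of `L`. -/
def grpOrbit {n : ℕ} (L : List (Perm (Fin n))) (x : Fin n) : Set (Fin n) :=
  {y | ∃ g ∈ Subgroup.closure {τ | τ ∈ L}, g x = y}

/-- `L` is, after restriction to the invariant set `X`, a transitive factorization of the
restriction of `σ` to `X` into 3-cycles of the symmetric group on `X`. -/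
def IsTransFact3On {n : ℕ} (X : Set (Fin n)) (σ : Perm (Fin n))
    (L : List (Perm (Fin n))) : Prop :=
  (∀ δ ∈ L, δ.IsThreeCycle ∧ ∀ y, δ y ≠ y → y ∈ X) ∧
  (∀ y ∈ X, L.prod y = σ y) ∧
  (∀ x ∈ X, ∀ y ∈ X, ∃ g ∈ Subgroup.closure {τ | τ ∈ L}, g x = y)

/-- Minimal version of `IsTransFact3On`. -/
def IsMinTransFact3On {n : ℕ} (X : Set (Fin n)) (σ : Perm (Fin n))
    (L : List (Perm (Fin n))) : Prop :=
  IsTransFact3On X σ L ∧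
  ∀ M : List (Perm (Fin n)), IsTransFact3On X σ M → L.length ≤ M.length

/-!
Write `c(π)` for the number of cycles of `π`, fixed points included. Multiplying by a
transposition cuts a cycle or joins two, and it can only join cycles lying in different orbits of
the group generated so far. Writing each 3-cycle as a product of two transpositions, a list of `k`
3-cycles generating a group with `r` orbits on `n` points therefore satisfies
`n + c(δ₁ ⋯ δ_k) ≤ 2k + 2r`. Conversely a permutation with a transitive factorization into
3-cycles has one of length `(n + c - 2) / 2`: peel off 3-cycles that join three cycles, or remove
points from the support. Hence a minimal transitive factorization of `σ` has length
`(n + c(σ) - 2) / 2`.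

For `δ₁ = (j₃ j₂ j₁)`, the permutation `σ' = δ₁⁻¹ σ` arises from `σ` by cutting the cycle through
`j₂, j₃` and joining the cycles of `j₁, j₂`, so `c(σ') = c(σ)`. The remaining `k - 1` factors are
then too few to act transitively, and since `δ₁` connects their orbits they have exactly two, those
of `j₁` and `j₃`. On each orbit the factors moving it are minimal: a shorter transitive
factorization there, together with `δ₁` and the factors of the other orbit, would be a shorter
factorization of `σ`.
-/

namespace Setoid

variable {α : Type*} (s : Setoid α) (x y : α)

/-- The finest setoid coarser than `s` relating `x` and `y`. -/
def glue : Setoid α where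
  r a b := s a b ∨ (s a x ∨ s a y) ∧ (s b x ∨ s b y)
  iseqv := by
    refine ⟨fun a => .inl (s.refl a), ?_, ?_⟩
    · rintro a b (h | ⟨ha, hb⟩)
      exacts [.inl (s.symm h), .inr ⟨hb, ha⟩]
    · rintro a b c (hab | ⟨ha, hb⟩) (hbc | ⟨hb', hc⟩)
      · exact .inl (s.trans hab hbc)
      · exact .inr ⟨hb'.imp (s.trans hab) (s.trans hab), hc⟩
      · exact .inr ⟨ha, hb.imp (s.trans (s.symm hbc)) (s.trans (s.symm hbc))⟩
      · exact .inr ⟨ha, hc⟩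

variable {s x y}

theorem le_glue : s ≤ s.glue x y := fun _ _ h => .inl h

theorem glue_rel : s.glue x y x y := .inr ⟨.inl (s.refl x), .inr (s.refl y)⟩

theorem glue_le {t : Setoid α} (hst : s ≤ t) (hxy : t x y) : s.glue x y ≤ t := by
  rintro a b (h | ⟨ha, hb⟩)
  · exact hst h
  · have hx : ∀ {c}, s c x ∨ s c y → t c x := fun hc =>
      hc.elim (fun h => hst h) (fun h => t.trans (hst h) (t.symm hxy))
    exact t.trans (hx ha) (t.symm (hx hb))

theorem glue_eq_self (h : s x y) : s.glue x y = s :=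
  le_antisymm (glue_le le_rfl h) le_glue

theorem glue_swap_apply [DecidableEq α] (a : α) : s.glue x y a (swap x y a) := by
  by_cases hx : a = x
  · simpa [hx] using glue_rel
  by_cases hy : a = y
  · simpa [hy] using (s.glue x y).symm glue_rel
  · rw [swap_apply_of_ne_of_ne hx hy]

theorem card_quotient_eq_of_rel_imp_eq (h : ∀ a b, s a b → a = b) :
    Nat.card (Quotient s) = Nat.card α :=
  (Nat.card_congr (Equiv.ofBijective _ ⟨fun a b hab => h a b (Quotient.exact hab),
    Quotient.mk_surjective⟩)).symm

theorem card_quotient_le_of_le [Finite α] {t : Setoid α} (h : s ≤ t) :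
    Nat.card (Quotient t) ≤ Nat.card (Quotient s) :=
  Nat.card_le_card_of_surjective (Quotient.map' id fun _ _ hab => h hab)
    (Quotient.ind fun a => ⟨Quotient.mk _ a, rfl⟩)

theorem card_quotient_glue_add_one [Finite α] (h : ¬ s x y) :
    Nat.card (Quotient (s.glue x y)) + 1 = Nat.card (Quotient s) := by
  let f : Quotient s → Option (Quotient (s.glue x y)) :=
    Quotient.lift (fun a => if s a y then none else some (Quotient.mk _ a)) fun a b hab => by
      by_cases ha : s a y
      · simp [ha, s.trans (s.symm hab) ha]
      · simp only [ha, show ¬ s b y from fun hb => ha (s.trans hab hb), if_false, Option.some.injEq]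
        exact Quotient.sound (le_glue hab)
  have hf : Function.Bijective f := by
    refine ⟨fun q q' hab => ?_, ?_⟩
    · induction q using Quotient.ind with | _ a =>
      induction q' using Quotient.ind with | _ b =>
      refine Quotient.sound ?_
      by_cases ha : s a y <;> by_cases hb : s b y <;>
        simp only [f, Quotient.lift_mk, ha, hb, if_true, if_false, reduceCtorEq,
          Option.some.injEq] at hab
      · exact s.trans ha (s.symm hb)
      · rcases Quotient.exact hab with hab | ⟨hax | hay, hbx | hby⟩
        exacts [hab, s.trans hax (s.symm hbx), absurd hby hb, absurd hay ha, absurd hay ha]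
    · rintro (_ | q)
      · exact ⟨Quotient.mk _ y, by simp [f]⟩
      · induction q using Quotient.ind with | _ a =>
        by_cases ha : s a y
        · refine ⟨Quotient.mk _ x, ?_⟩
          simp only [f, Quotient.lift_mk, h, if_false]
          exact congrArg some (Quotient.sound (.inr ⟨.inl (s.refl x), .inr ha⟩))
        · exact ⟨Quotient.mk _ a, by simp [f, ha]⟩
  rw [← Finite.card_option, Nat.card_congr (Equiv.ofBijective f hf)]

end Setoid

namespace Equiv.Perm

open Setoid

variable {α : Type*}

theorem orbitRel_closure_iff {S : Set (Perm α)} {a b : α} :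
    MulAction.orbitRel (Subgroup.closure S) α a b ↔ ∃ g ∈ Subgroup.closure S, g a = b := by
  rw [MulAction.orbitRel_apply, MulAction.mem_orbit_iff]
  constructor
  · rintro ⟨⟨g, hg⟩, rfl⟩
    exact ⟨g⁻¹, inv_mem hg, by simp [Subgroup.smul_def, Perm.smul_def]⟩
  · rintro ⟨g, hg, rfl⟩
    exact ⟨⟨g⁻¹, inv_mem hg⟩, by simp [Subgroup.smul_def, Perm.smul_def]⟩

theorem orbitRel_closure_le {S : Set (Perm α)} {e : Setoid α} (h : ∀ g ∈ S, ∀ z, e z (g z)) :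
    MulAction.orbitRel (Subgroup.closure S) α ≤ e := by
  suffices H : ∀ g ∈ Subgroup.closure S, ∀ z, e z (g z) by
    intro a b hab
    obtain ⟨g, hg, rfl⟩ := orbitRel_closure_iff.1 hab
    exact H g hg a
  intro g hg
  induction hg using Subgroup.closure_induction with
  | mem g hg => exact h g hg
  | one => exact e.refl
  | mul g g' _ _ ihg ihg' => exact fun z => e.trans (ihg' z) (ihg (g' z))
  | inv g _ ihg => exact fun z => by simpa using e.symm (ihg (g⁻¹ z))

theorem orbitRel_closure_mono {S T : Set (Perm α)} (h : S ⊆ T) :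
    MulAction.orbitRel (Subgroup.closure S) α ≤ MulAction.orbitRel (Subgroup.closure T) α :=
  orbitRel_closure_le fun g hg _ => orbitRel_closure_iff.2 ⟨g, Subgroup.subset_closure (h hg), rfl⟩

theorem sameCycle_setoid_le {π : Perm α} {e : Setoid α} (h : ∀ z, e z (π z)) :
    SameCycle.setoid π ≤ e := by
  intro a b hab
  obtain ⟨i, rfl⟩ : π.SameCycle a b := hab
  refine orbitRel_closure_le (S := {π}) (fun g hg => ?_) (orbitRel_closure_iff.2 ⟨π ^ i, ?_, rfl⟩)
  · rw [Set.mem_singleton_iff.1 hg]; exact h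
  · exact zpow_mem (Subgroup.subset_closure (Set.mem_singleton π)) i

theorem SameCycle.mem_of_mapsTo [Finite α] {π : Perm α} {s : Set α} (hs : Set.MapsTo π s s)
    {a b : α} (h : π.SameCycle a b) (ha : a ∈ s) : b ∈ s := by
  obtain ⟨i, rfl⟩ := h.exists_nat_pow_eq
  rw [coe_pow]
  exact hs.iterate i ha

theorem prod_filter_apply {L : List (Perm α)} {p : Perm α → Bool} {X : Set α}
    (hX : ∀ δ ∈ L, Set.MapsTo δ X X) (hp : ∀ δ ∈ L, p δ = false → ∀ y ∈ X, δ y = y)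
    {y : α} (hy : y ∈ X) : (L.filter p).prod y = L.prod y := by
  suffices (L.filter p).prod y = L.prod y ∧ L.prod y ∈ X from this.1
  induction L with
  | nil => exact ⟨rfl, hy⟩
  | cons δ L ih =>
    obtain ⟨ih, hLy⟩ := ih (fun τ hτ => hX τ (.tail _ hτ)) (fun τ hτ => hp τ (.tail _ hτ))
    refine ⟨?_, hX δ (.head _) hLy⟩
    cases hδ : p δ
    · simp [hδ, ih, hp δ (.head _) hδ _ hLy]
    · simp [hδ, ih]

theorem prod_apply_eq_self {L : List (Perm α)} {y : α} (h : ∀ δ ∈ L, δ y = y) : L.prod y = y :=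
  MulAction.mem_stabilizer_iff.1
    (Subgroup.list_prod_mem (MulAction.stabilizer (Perm α) y) fun δ hδ => h δ hδ)

theorem exists_mem_closure_apply_eq {S T : Set (Perm α)} {X : Set α}
    (hX : ∀ g ∈ Subgroup.closure S, Set.MapsTo g X X) (hST : ∀ τ ∈ S, τ ∈ T ∨ ∀ z ∈ X, τ z = z)
    {g : Perm α} (hg : g ∈ Subgroup.closure S) {z : α} (hz : z ∈ X) :
    ∃ h ∈ Subgroup.closure T, h z = g z := by
  induction hg using Subgroup.closure_induction generalizing z with
  | mem τ hτ =>
    rcases hST τ hτ with hτ | hτ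
    exacts [⟨τ, Subgroup.subset_closure hτ, rfl⟩, ⟨1, one_mem _, (hτ z hz).symm⟩]
  | one => exact ⟨1, one_mem _, rfl⟩
  | mul g g' hg hg' ih ih' =>
    obtain ⟨h', hh', e'⟩ := ih' hz
    obtain ⟨h, hh, e⟩ := ih (hX g' hg' hz)
    exact ⟨h * h', mul_mem hh hh', by simp [e, e']⟩
  | inv g hg ih =>
    obtain ⟨h, hh, e⟩ := ih (hX _ (inv_mem hg) hz)
    exact ⟨h⁻¹, inv_mem hh, by rw [inv_eq_iff_eq, e]; simp⟩

/-- The number of cycles of `π`, fixed points included. -/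
noncomputable def cycleCount (π : Perm α) : ℕ := Nat.card (Quotient (SameCycle.setoid π))

theorem cycleCount_one : cycleCount (1 : Perm α) = Nat.card α :=
  card_quotient_eq_of_rel_imp_eq fun _ _ => sameCycle_one.1

variable [DecidableEq α] {π : Perm α} {x y : α}

theorem glue_swap_mul_apply {s : Setoid α} (hπ : ∀ z, s z (π z)) (z : α) :
    s.glue x y z ((swap x y * π) z) :=
  (s.glue x y).trans (le_glue (hπ z)) (glue_swap_apply _)

theorem sameCycle_setoid_swap_mul_le :
    SameCycle.setoid (swap x y * π) ≤ (SameCycle.setoid π).glue x y :=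
  sameCycle_setoid_le (glue_swap_mul_apply fun z => (sameCycle_apply_right (f := π)).2 (.refl π z))

theorem sameCycle_swap_mul_of_not_sameCycle [Finite α] (h : ¬ π.SameCycle x y) :
    (swap x y * π).SameCycle x y := by
  set π' := swap x y * π
  have hstep : ∀ i : ℕ, π'.SameCycle y ((π ^ i) y) ∨ π'.SameCycle y x := by
    intro i
    induction i with
    | zero => exact .inl (.refl _ _)
    | succ i ih =>
      refine ih.elim (fun ih => ?_) .inr
      have hnext : π'.SameCycle y (swap x y ((π ^ (i + 1)) y)) := by
        rw [pow_succ', mul_apply]; exact sameCycle_apply_right.2 ih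
      have hx : (π ^ (i + 1)) y ≠ x :=
        fun hx => h (SameCycle.symm ⟨(i + 1 : ℕ), by rw [zpow_natCast, hx]⟩)
      by_cases hy : (π ^ (i + 1)) y = y
      · rw [hy, swap_apply_right] at hnext; exact .inr hnext
      · rw [swap_apply_of_ne_of_ne hx hy] at hnext; exact .inl hnext
  obtain ⟨i, hi⟩ := (sameCycle_apply_right.1 (by simpa using SameCycle.refl π y) :
    π.SameCycle y (π⁻¹ y)).exists_nat_pow_eq
  refine ((hstep i).elim (fun hc => ?_) id).symm
  simpa [π', hi] using sameCycle_apply_right.2 hc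

theorem not_sameCycle_swap_mul_of_sameCycle [Finite α] (hxy : x ≠ y) (h : π.SameCycle x y) :
    ¬ (swap x y * π).SameCycle x y := by
  have hex : ∃ t, 0 < t ∧ (π ^ t) x = y :=
    let ⟨t, ht, _, hty⟩ := h.exists_pow_eq''; ⟨t, ht, hty⟩
  obtain ⟨t, ⟨ht, hty⟩, hmin⟩ : ∃ t, (0 < t ∧ (π ^ t) x = y) ∧
      ∀ k < t, ¬ (0 < k ∧ (π ^ k) x = y) :=
    ⟨Nat.find hex, Nat.find_spec hex, fun k hk => Nat.find_min hex hk⟩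
  -- the first `t` points of the `π`-cycle of `x` are permuted by `swap x y * π`
  have hs : Set.MapsTo (swap x y * π) {z | ∃ k < t, (π ^ k) x = z}
      {z | ∃ k < t, (π ^ k) x = z} := by
    rintro _ ⟨k, hk, rfl⟩
    rw [mul_apply, ← mul_apply π, ← pow_succ']
    rcases (Nat.succ_le_of_lt hk).eq_or_lt with hkt | hkt
    · exact ⟨0, ht, by rw [show k + 1 = t from hkt, hty, swap_apply_right, pow_zero, one_apply]⟩
    refine ⟨k + 1, hkt, (swap_apply_of_ne_of_ne (fun hx => ?_)
      fun hy => hmin _ hkt ⟨k.succ_pos, hy⟩).symm⟩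
    refine hmin (t - (k + 1)) (by omega) ⟨by omega, ?_⟩
    rw [← hty, ← Nat.sub_add_cancel hkt.le, pow_add, mul_apply, hx, Nat.sub_add_cancel hkt.le]
  intro hc
  obtain ⟨k, hk, hky⟩ := hc.mem_of_mapsTo hs ⟨0, ht, by simp⟩
  rcases k.eq_zero_or_pos with rfl | hk0
  · exact hxy (by simpa using hky)
  · exact hmin k hk ⟨hk0, hky⟩

theorem cycleCount_swap_mul_add_one [Finite α] (h : ¬ π.SameCycle x y) :
    cycleCount (swap x y * π) + 1 = cycleCount π := by
  have hjoin := sameCycle_swap_mul_of_not_sameCycle h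
  have hle := sameCycle_setoid_swap_mul_le (π := swap x y * π) (x := x) (y := y)
  rw [swap_mul_self_mul, glue_eq_self (s := SameCycle.setoid _) hjoin] at hle
  rw [cycleCount, le_antisymm sameCycle_setoid_swap_mul_le (glue_le hle hjoin)]
  exact card_quotient_glue_add_one h

theorem cycleCount_swap_mul_of_sameCycle [Finite α] (hxy : x ≠ y) (h : π.SameCycle x y) :
    cycleCount (swap x y * π) = cycleCount π + 1 := by
  simpa using (cycleCount_swap_mul_add_one (not_sameCycle_swap_mul_of_sameCycle hxy h)).symm

theorem cycleCount_swap_mul_add_one_or [Finite α] (hxy : x ≠ y) :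
    cycleCount (swap x y * π) + 1 = cycleCount π ∨
      cycleCount (swap x y * π) = cycleCount π + 1 := by
  by_cases h : π.SameCycle x y
  exacts [.inr (cycleCount_swap_mul_of_sameCycle hxy h), .inl (cycleCount_swap_mul_add_one h)]

theorem cycleCount_swap_mul_le [Finite α] (x y : α) :
    cycleCount (swap x y * π) ≤ cycleCount π + 1 := by
  by_cases hxy : x = y
  · simp [hxy, ← Perm.one_def]
  · have := cycleCount_swap_mul_add_one_or (π := π) hxy
    omega

theorem sameCycle_swap_mul_swap_mul [Finite α] {σ : Perm α} {j₁ j₂ j₃ : α} (h23 : j₂ ≠ j₃)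
    (hc23 : σ.SameCycle j₂ j₃) (hc12 : ¬ σ.SameCycle j₁ j₂) :
    ((swap j₂ j₁ * (swap j₃ j₂ * σ)).SameCycle j₁ j₂ ∧
      ¬ (swap j₂ j₁ * (swap j₃ j₂ * σ)).SameCycle j₁ j₃ ∧
      ¬ (swap j₂ j₁ * (swap j₃ j₂ * σ)).SameCycle j₂ j₃) ∧
    cycleCount (swap j₂ j₁ * (swap j₃ j₂ * σ)) = cycleCount σ := by
  set τ := swap j₃ j₂ * σ
  have hcut : ¬ τ.SameCycle j₃ j₂ := not_sameCycle_swap_mul_of_sameCycle h23.symm hc23.symm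
  have hτ : ∀ {z}, τ.SameCycle j₁ z → σ.SameCycle j₁ z := fun h => by
    rcases sameCycle_setoid_swap_mul_le h with h | ⟨h | h, -⟩
    exacts [h, absurd (h.trans hc23.symm) hc12, absurd h hc12]
  have h₁₂ : ¬ τ.SameCycle j₂ j₁ := fun h => hc12 (hτ h.symm)
  have h₁₃ : ¬ (swap j₂ j₁ * τ).SameCycle j₁ j₃ := fun h => by
    rcases sameCycle_setoid_swap_mul_le h with h | ⟨-, h | h⟩
    exacts [hc12 (hτ h |>.trans hc23.symm), hcut h, hc12 (hτ h.symm |>.trans hc23.symm)]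
  have hjoin := (sameCycle_swap_mul_of_not_sameCycle h₁₂).symm
  refine ⟨⟨hjoin, h₁₃, fun h => h₁₃ (hjoin.trans h)⟩, ?_⟩
  have h₁ : cycleCount (swap j₂ j₁ * τ) + 1 = cycleCount τ := cycleCount_swap_mul_add_one h₁₂
  have h₂ : cycleCount τ = cycleCount σ + 1 := cycleCount_swap_mul_of_sameCycle h23.symm hc23.symm
  omega

/-- If `s` relates `x` and `y`, the cycle count grows by at most one; otherwise the transposition
joins two cycles while `s` loses a class. -/
theorem cycleCount_swap_mul_add_two_mul_card_le [Finite α] {s : Setoid α}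
    (hπ : ∀ z, s z (π z)) (x y : α) :
    cycleCount (swap x y * π) + 2 * Nat.card (Quotient s) ≤
      cycleCount π + 1 + 2 * Nat.card (Quotient (s.glue x y)) := by
  by_cases hxy : s x y
  · rw [glue_eq_self hxy]
    have := cycleCount_swap_mul_le (π := π) x y
    omega
  · have hc := cycleCount_swap_mul_add_one fun h => hxy (sameCycle_setoid_le hπ h)
    have hs := card_quotient_glue_add_one hxy
    omega

theorem orbitRel_closure_cons_swap_mul_swap_le (L : List (Perm α)) (a b c : α) :
    MulAction.orbitRel (Subgroup.closure {τ | τ ∈ swap a b * swap b c :: L}) α ≤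
      ((MulAction.orbitRel (Subgroup.closure {τ | τ ∈ L}) α).glue b c).glue a b := by
  set s := MulAction.orbitRel (Subgroup.closure {τ | τ ∈ L}) α
  refine orbitRel_closure_le fun g hg z => ?_
  rcases List.mem_cons.1 hg with rfl | hg
  · simpa using glue_swap_mul_apply (π := swap b c)
      (glue_swap_mul_apply (π := 1) (x := b) (y := c) fun z => s.refl z) z
  · exact le_glue (le_glue (orbitRel_closure_iff.2 ⟨g, Subgroup.subset_closure hg, rfl⟩))

theorem IsThreeCycle.exists_eq_swap_mul_swap [Fintype α] {δ : Perm α} (hδ : δ.IsThreeCycle) :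
    ∃ a b c, [a, b, c].Nodup ∧ δ = swap a b * swap b c := by
  obtain ⟨a, ha⟩ := Finset.card_pos.1 (hδ.card_support.symm ▸ three_pos : 0 < δ.support.card)
  exact ⟨a, δ a, δ (δ a), hδ.nodup_iff_mem_support.2 ha, hδ.eq_swap_mul_swap_iff_mem_support.2 ha⟩

theorem even_card_add_cycleCount_prod [Fintype α] {L : List (Perm α)}
    (hL : ∀ δ ∈ L, δ.IsThreeCycle) : Even (Fintype.card α + cycleCount L.prod) := by
  induction L with
  | nil => simp [cycleCount_one, Nat.card_eq_fintype_card]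
  | cons δ L ih =>
    obtain ⟨a, b, c, habc, rfl⟩ := (hL _ List.mem_cons_self).exists_eq_swap_mul_swap
    have ih := Nat.even_iff.1 (ih fun τ hτ => hL τ (List.mem_cons_of_mem _ hτ))
    have hab : a ≠ b := by simp_all
    have hbc : b ≠ c := by simp_all
    rw [List.prod_cons, mul_assoc, Nat.even_iff]
    rcases cycleCount_swap_mul_add_one_or (π := L.prod) hbc with h1 | h1 <;>
      rcases cycleCount_swap_mul_add_one_or (π := swap b c * L.prod) hab with h2 | h2 <;> omega

theorem card_add_cycleCount_prod_le [Fintype α] {L : List (Perm α)}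
    (hL : ∀ δ ∈ L, δ.IsThreeCycle) :
    Fintype.card α + cycleCount L.prod ≤
      2 * L.length +
        2 * Nat.card (Quotient (MulAction.orbitRel (Subgroup.closure {τ | τ ∈ L}) α)) := by
  induction L with
  | nil =>
    have : MulAction.orbitRel (Subgroup.closure {τ | τ ∈ ([] : List (Perm α))}) α = ⊥ := by
      ext a b
      simp [orbitRel_closure_iff, eq_comm]
    rw [this, card_quotient_eq_of_rel_imp_eq fun _ _ => id, List.prod_nil, cycleCount_one,
      Nat.card_eq_fintype_card]
    omega
  | cons δ L ih =>
    obtain ⟨a, b, c, -, rfl⟩ := (hL _ List.mem_cons_self).exists_eq_swap_mul_swap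
    have ih := ih fun τ hτ => hL τ (List.mem_cons_of_mem _ hτ)
    set s := MulAction.orbitRel (Subgroup.closure {τ | τ ∈ L}) α
    have hπ : ∀ z, s z (L.prod z) := fun z => orbitRel_closure_iff.2
      ⟨_, Subgroup.list_prod_mem _ fun τ hτ => Subgroup.subset_closure hτ, rfl⟩
    have h1 := cycleCount_swap_mul_add_two_mul_card_le hπ b c
    have h2 :=
      cycleCount_swap_mul_add_two_mul_card_le (glue_swap_mul_apply (x := b) (y := c) hπ) a b
    have h3 : Nat.card (Quotient ((s.glue b c).glue a b)) ≤ _ :=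
      card_quotient_le_of_le (orbitRel_closure_cons_swap_mul_swap_le L a b c)
    rw [List.prod_cons, mul_assoc, List.length_cons]
    omega

section Construction

variable {σ : Perm α} {X : Finset α}

/-- The number of cycles of `σ` meeting `X`. -/
noncomputable def cycleCountOn (σ : Perm α) (X : Finset α) : ℕ :=
  (X.image (Quotient.mk (SameCycle.setoid σ))).card

theorem exists_mem_apply_ne_of_cycleCountOn_lt (h : cycleCountOn σ X < X.card) :
    ∃ v ∈ X, σ v ≠ v := by
  by_contra! hfix
  refine h.ne (Finset.card_image_of_injOn fun x hx y _ hxy => ?_)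
  exact SameCycle.eq_of_left (Quotient.exact hxy) (hfix x hx)

variable [Fintype α]

theorem support_swap_mul_subset {x y : α} (hx : x ∈ X) (hy : y ∈ X) (hσ : σ.support ⊆ X) :
    (swap x y * σ).support ⊆ X := by
  intro z hz
  by_contra hzX
  refine mem_support.1 hz ?_
  rw [mul_apply, notMem_support.1 fun h => hzX (hσ h)]
  exact swap_apply_of_ne_of_ne (fun h => hzX (h ▸ hx)) (fun h => hzX (h ▸ hy))

theorem isThreeCycle_swap_mul_swap {x y z : α} (h : [x, y, z].Nodup) :
    (swap x y * swap y z).IsThreeCycle := by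
  rw [← card_support_eq_three_iff, support_swap_mul_swap h]
  simp_all

theorem cycleCount_eq_cycleCountOn_add (hσ : σ.support ⊆ X) :
    cycleCount σ = cycleCountOn σ X + (Fintype.card α - X.card) := by
  have hfix : ∀ z ∉ X, σ z = z := fun z hz => notMem_support.1 fun h => hz (hσ h)
  have hmk : ∀ {z w}, z ∉ X → Quotient.mk (SameCycle.setoid σ) z = Quotient.mk _ w → z = w :=
    fun hz h => SameCycle.eq_of_left (Quotient.exact h) (hfix _ hz)
  rw [cycleCount, Nat.card_eq_fintype_card, ← Finset.card_univ, ← Finset.card_compl,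
    ← Finset.image_univ_of_surjective Quotient.mk_surjective, ← Finset.union_compl X,
    Finset.image_union, Finset.card_union_of_disjoint, cycleCountOn,
    Finset.card_image_of_injOn fun z hz w _ h => hmk (Finset.mem_compl.1 hz) h]
  refine Finset.disjoint_left.2 fun q hq hq' => ?_
  obtain ⟨x, hx, rfl⟩ := Finset.mem_image.1 hq
  obtain ⟨z, hz, hzx⟩ := Finset.mem_image.1 hq'
  exact Finset.mem_compl.1 hz (hmk (Finset.mem_compl.1 hz) hzx ▸ hx)

def IsThreeCycleFactorizationOn (X : Finset α) (σ : Perm α) (F : List (Perm α)) : Prop :=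
  (∀ δ ∈ F, δ.IsThreeCycle ∧ δ.support ⊆ X) ∧ F.prod = σ ∧
    ∀ x ∈ X, ∀ y ∈ X, MulAction.orbitRel (Subgroup.closure {τ | τ ∈ F}) α x y

structure ThreeCycleStep (X X' : Finset α) (σ δ σ' : Perm α) : Prop where
  isThreeCycle : δ.IsThreeCycle
  support_subset : δ.support ⊆ X
  subset : X' ⊆ X
  exists_sameCycle : ∀ x ∈ X, ∃ y ∈ X', δ.SameCycle x y
  support_subset_right : σ'.support ⊆ X'
  mul_eq : δ * σ' = σ

theorem IsThreeCycleFactorizationOn.cons {X' : Finset α} {δ σ' : Perm α} {F : List (Perm α)}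
    (hF : IsThreeCycleFactorizationOn X' σ' F) (hstep : ThreeCycleStep X X' σ δ σ') :
    IsThreeCycleFactorizationOn X σ (δ :: F) := by
  set s := MulAction.orbitRel (Subgroup.closure {τ | τ ∈ δ :: F}) α
  have hδ : ∀ {x y}, δ.SameCycle x y → s x y := fun h => sameCycle_setoid_le (fun z =>
    orbitRel_closure_iff.2 ⟨δ, Subgroup.subset_closure List.mem_cons_self, rfl⟩) h
  have hF' := orbitRel_closure_mono (α := α) fun τ (hτ : τ ∈ F) => List.mem_cons_of_mem δ hτ
  refine ⟨fun τ hτ => ?_, by rw [List.prod_cons, hF.2.1, hstep.mul_eq], fun x hx y hy => ?_⟩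
  · rcases List.mem_cons.1 hτ with rfl | hτ
    exacts [⟨hstep.isThreeCycle, hstep.support_subset⟩,
      ⟨(hF.1 τ hτ).1, (hF.1 τ hτ).2.trans hstep.subset⟩]
  · obtain ⟨x', hx', hxx'⟩ := hstep.exists_sameCycle x hx
    obtain ⟨y', hy', hyy'⟩ := hstep.exists_sameCycle y hy
    exact s.trans (hδ hxx') (s.trans (hF' (hF.2.2 x' hx' y' hy')) (s.symm (hδ hyy')))

theorem exists_threeCycleStep_of_not_sameCycle {a b c : α} (ha : a ∈ X) (hb : b ∈ X)
    (hc : c ∈ X) (hab : ¬ σ.SameCycle a b) (hac : ¬ σ.SameCycle a c) (hbc : ¬ σ.SameCycle b c)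
    (hσ : σ.support ⊆ X) :
    ∃ δ σ', ThreeCycleStep X X σ δ σ' ∧ cycleCount σ' + 2 = cycleCount σ := by
  have hnodup : [b, a, c].Nodup := by
    have : ∀ {x y}, ¬ σ.SameCycle x y → x ≠ y := by rintro x _ h rfl; exact h (.refl _ _)
    simp [this hac, this hbc, (this hab).symm]
  -- join the cycles of `b` and `a`, then the one of `c`
  have h₁ := cycleCount_swap_mul_add_one (x := b) (y := a) fun h => hab h.symm
  have hac' : ¬ (swap b a * σ).SameCycle a c := fun h => by
    rcases sameCycle_setoid_swap_mul_le h with h | ⟨-, h | h⟩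
    exacts [hac h, hbc h.symm, hac h.symm]
  have h₂ := cycleCount_swap_mul_add_one hac'
  refine ⟨swap b a * swap a c, swap a c * (swap b a * σ), ⟨isThreeCycle_swap_mul_swap hnodup,
    ?_, subset_rfl, fun x hx => ⟨x, hx, .refl _ _⟩, ?_, ?_⟩, by omega⟩
  · rw [support_swap_mul_swap hnodup]
    simp [Finset.insert_subset_iff, ha, hb, hc]
  · exact support_swap_mul_subset ha hc (support_swap_mul_subset hb ha hσ)
  · rw [mul_assoc, swap_mul_self_mul, swap_mul_self_mul]

theorem exists_threeCycleStep_of_apply_apply_ne {u : α} (hu : σ u ≠ u) (hu' : σ (σ u) ≠ u)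
    (hσ : σ.support ⊆ X) :
    ∃ δ σ', ThreeCycleStep X ((X.erase u).erase (σ u)) σ δ σ' ∧
      cycleCount σ' = cycleCount σ + 2 := by
  have hb : σ (σ u) ≠ σ u := fun h => hu (σ.injective h)
  have hnodup : [u, σ u, σ (σ u)].Nodup := by simp [hu.symm, hu'.symm, hb.symm]
  have hc' : σ (σ (σ u)) ≠ σ (σ u) := fun h => hb (σ.injective h)
  have hmem : ∀ {z}, σ z ≠ z → z ∈ X := fun h => hσ (mem_support.2 h)
  -- cut `u` and then `σ u` off their cycle as fixed points
  have h₁ := cycleCount_swap_mul_of_sameCycle hu.symm (⟨1, rfl⟩ : σ.SameCycle u (σ u))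
  have h₂ := cycleCount_swap_mul_of_sameCycle (π := swap u (σ u) * σ) hb.symm
    ⟨1, by simp [swap_apply_of_ne_of_ne hu' hb]⟩
  refine ⟨swap u (σ u) * swap (σ u) (σ (σ u)), swap (σ u) (σ (σ u)) * (swap u (σ u) * σ),
    ⟨isThreeCycle_swap_mul_swap hnodup, ?_, (Finset.erase_subset _ _).trans
      (Finset.erase_subset _ _), fun x hx => ?_, ?_, ?_⟩, by omega⟩
  · rw [support_swap_mul_swap hnodup]
    simp [Finset.insert_subset_iff, hmem hu, hmem hb, hmem hc']
  · have h₁ : (swap u (σ u) * swap (σ u) (σ (σ u))).SameCycle (σ u) (σ (σ u)) :=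
      ⟨1, by simp [swap_apply_of_ne_of_ne hu' hb]⟩
    have h₀ : (swap u (σ u) * swap (σ u) (σ (σ u))).SameCycle u (σ u) :=
      ⟨1, by simp [swap_apply_of_ne_of_ne hu.symm hu'.symm]⟩
    have hc : σ (σ u) ∈ (X.erase u).erase (σ u) := by simp [hb, hu', hmem hc']
    by_cases hxu : x = u
    · exact ⟨_, hc, hxu ▸ h₀.trans h₁⟩
    by_cases hxb : x = σ u
    · exact ⟨_, hc, hxb ▸ h₁⟩
    · exact ⟨x, by simp [hx, hxu, hxb], .refl _ _⟩
  · intro z hz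
    have hzu : z ≠ u := by
      rintro rfl
      exact mem_support.1 hz (by simp [swap_apply_of_ne_of_ne hu.symm hu'.symm])
    have hzb : z ≠ σ u := by
      rintro rfl
      exact mem_support.1 hz (by simp [swap_apply_of_ne_of_ne hu' hb])
    exact Finset.mem_erase.2 ⟨hzb, Finset.mem_erase.2 ⟨hzu, support_swap_mul_subset (hmem hb)
      (hmem hc') (support_swap_mul_subset (hmem hu) (hmem hb) hσ) hz⟩⟩
  · rw [mul_assoc, swap_mul_self_mul, swap_mul_self_mul]

theorem exists_threeCycleStep_of_not_sameCycle_of_apply_ne {u v : α} (hu : u ∈ X)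
    (huv : ¬ σ.SameCycle u v) (hv : σ v ≠ v) (hσ : σ.support ⊆ X) :
    ∃ δ σ', ThreeCycleStep X (X.erase (σ⁻¹ v)) σ δ σ' ∧ cycleCount σ' = cycleCount σ := by
  set p := σ⁻¹ v
  have hp : σ p = v := σ.apply_symm_apply v
  have hvu : v ≠ u := by rintro rfl; exact huv (.refl _ _)
  have hup : u ≠ p := by rintro rfl; exact huv ⟨1, hp⟩
  have hvp : v ≠ p := fun h => hv (by rw [h, hp, ← h])
  have hnodup : [v, u, p].Nodup := by simp [hvu, hup, hvp]
  have hmem : ∀ {z}, σ z ≠ z → z ∈ X := fun h => hσ (mem_support.2 h)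
  have hvX : v ∈ X := hmem hv
  have hpX : p ∈ X := hmem (by rw [hp]; exact hvp)
  have hσ'p : (swap u p * (swap v u * σ)) p = p := by simp [hp]
  -- join the cycles of `v` and `u`, then cut off the predecessor `p` of `v` as a fixed point
  have h₁ := cycleCount_swap_mul_add_one (x := v) (y := u) fun h => huv h.symm
  have h₂ := cycleCount_swap_mul_of_sameCycle (π := swap v u * σ) hup
    (SameCycle.symm ⟨1, by simp [hp]⟩)
  refine ⟨swap v u * swap u p, swap u p * (swap v u * σ), ⟨isThreeCycle_swap_mul_swap hnodup,
    ?_, Finset.erase_subset _ _, fun x hx => ?_, fun z hz => ?_, ?_⟩, by omega⟩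
  · rw [support_swap_mul_swap hnodup]
    simp [Finset.insert_subset_iff, hu, hvX, hpX]
  · by_cases hxp : x = p
    · exact ⟨v, by simp [hvp, hvX], hxp ▸ ⟨1, by simp⟩⟩
    · exact ⟨x, by simp [hx, hxp], .refl _ _⟩
  · refine Finset.mem_erase.2 ⟨?_, support_swap_mul_subset hu hpX
      (support_swap_mul_subset hvX hu hσ) hz⟩
    rintro rfl
    exact mem_support.1 hz hσ'p
  · rw [mul_assoc, swap_mul_self_mul, swap_mul_self_mul]

theorem apply_apply_ne_of_forall_sameCycle {u : α} (hX : 2 < X.card)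
    (h : ∀ x ∈ X, σ.SameCycle u x) : σ (σ u) ≠ u := by
  intro hu
  have hs : Set.MapsTo σ {u, σ u} {u, σ u} := by rintro z (rfl | rfl) <;> simp [hu]
  have hXu : X ⊆ {u, σ u} := fun x hx => by simpa using (h x hx).mem_of_mapsTo hs (by simp)
  have := (Finset.card_le_card hXu).trans (Finset.card_insert_le _ _)
  simp only [Finset.card_singleton] at this
  omega

theorem exists_threeCycleStep (hσ : σ.support ⊆ X) (hX : 3 ≤ X.card)
    (hpar : Even (X.card + cycleCountOn σ X)) :
    ∃ X' δ σ', ThreeCycleStep X X' σ δ σ' ∧ X'.card ≠ 2 ∧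
      2 * X'.card + cycleCount σ' + 2 = 2 * X.card + cycleCount σ := by
  set mk := Quotient.mk (SameCycle.setoid σ)
  have hk : cycleCountOn σ X = (X.image mk).card := rfl
  have hk_le : cycleCountOn σ X ≤ X.card := Finset.card_image_le
  have hk_pos : 0 < cycleCountOn σ X :=
    ((Finset.card_pos.1 (by omega : 0 < X.card)).image _).card_pos
  rw [Nat.even_iff] at hpar
  rcases (by omega : 3 ≤ cycleCountOn σ X ∨ cycleCountOn σ X = 1 ∨ cycleCountOn σ X = 2)
    with h3 | h1 | h2
  · obtain ⟨_, hqa, _, hqb, _, hqc, hab, hac, hbc⟩ := Finset.two_lt_card.1 (hk ▸ h3)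
    obtain ⟨a, ha, rfl⟩ := Finset.mem_image.1 hqa
    obtain ⟨b, hb, rfl⟩ := Finset.mem_image.1 hqb
    obtain ⟨c, hc, rfl⟩ := Finset.mem_image.1 hqc
    obtain ⟨δ, σ', hstep, hcount⟩ := exists_threeCycleStep_of_not_sameCycle ha hb hc
      (fun h => hab (Quotient.sound h)) (fun h => hac (Quotient.sound h))
      (fun h => hbc (Quotient.sound h)) hσ
    exact ⟨X, δ, σ', hstep, by omega, by omega⟩
  · obtain ⟨u, hu, hσu⟩ := exists_mem_apply_ne_of_cycleCountOn_lt (σ := σ) (X := X) (by omega)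
    have hu' := apply_apply_ne_of_forall_sameCycle (by omega) fun x hx => Quotient.exact
      (Finset.card_le_one.1 (hk ▸ h1.le) _ (Finset.mem_image_of_mem mk hu) _
        (Finset.mem_image_of_mem mk hx))
    obtain ⟨δ, σ', hstep, hcount⟩ := exists_threeCycleStep_of_apply_apply_ne hσu hu' hσ
    have hσu : σ u ∈ X.erase u :=
      Finset.mem_erase.2 ⟨hσu, hσ (mem_support.2 fun h => hσu (σ.injective h))⟩
    have hcard := Finset.card_erase_of_mem hσu
    rw [Finset.card_erase_of_mem hu] at hcard
    exact ⟨_, δ, σ', hstep, by omega, by omega⟩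
  · obtain ⟨v, hv, hσv⟩ := exists_mem_apply_ne_of_cycleCountOn_lt (σ := σ) (X := X) (by omega)
    obtain ⟨_, hq, hqv⟩ := Finset.exists_mem_ne (by omega : 1 < (X.image mk).card) (mk v)
    obtain ⟨u, hu, rfl⟩ := Finset.mem_image.1 hq
    obtain ⟨δ, σ', hstep, hcount⟩ := exists_threeCycleStep_of_not_sameCycle_of_apply_ne hu
      (fun h => hqv (Quotient.sound h)) hσv hσ
    have hcard := Finset.card_erase_of_mem (s := X) (hσ (x := σ⁻¹ v) (by
      rw [← support_inv, apply_mem_support, support_inv]; exact mem_support.2 hσv))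
    exact ⟨_, δ, σ', hstep, by omega, by omega⟩

theorem exists_isThreeCycleFactorizationOn (N : ℕ) (hσ : σ.support ⊆ X) (hX : X.card ≠ 2)
    (hN : X.card + cycleCountOn σ X = 2 * N + 2) :
    ∃ F, F.length = N ∧ IsThreeCycleFactorizationOn X σ F := by
  induction N generalizing σ X with
  | zero =>
    have hX1 : X.card ≤ 1 := by
      have : cycleCountOn σ X ≤ X.card := Finset.card_image_le
      omega
    have hσ1 : σ = 1 := by
      have := (Finset.card_le_card hσ).trans hX1
      have := σ.card_support_ne_one
      exact support_eq_empty_iff.1 (Finset.card_eq_zero.1 (by omega))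
    refine ⟨[], rfl, by simp, by simp [hσ1], fun x hx y hy => ?_⟩
    rw [Finset.card_le_one.1 hX1 x hx y hy]
  | succ N ih =>
    obtain ⟨X', δ, σ', hstep, hX', hcount⟩ := exists_threeCycleStep hσ
      (by have : cycleCountOn σ X ≤ X.card := Finset.card_image_le; omega)
      (Nat.even_iff.2 (by omega))
    have := cycleCount_eq_cycleCountOn_add hσ
    have := cycleCount_eq_cycleCountOn_add hstep.support_subset_right
    have := Finset.card_le_univ X
    have := Finset.card_le_univ X'
    obtain ⟨F, hF, hFσ⟩ := ih hstep.support_subset_right hX' (by omega)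
    exact ⟨δ :: F, by simp [hF], hFσ.cons hstep⟩

end Construction

end Equiv.Perm

open Equiv.Perm Setoid

section Orbits

variable {n : ℕ} {L : List (Perm (Fin n))}

theorem mem_grpOrbit_iff {x y : Fin n} :
    y ∈ grpOrbit L x ↔ MulAction.orbitRel (Subgroup.closure {τ | τ ∈ L}) (Fin n) x y :=
  orbitRel_closure_iff.symm

theorem mem_grpOrbit_self (x : Fin n) : x ∈ grpOrbit L x := ⟨1, one_mem _, rfl⟩

theorem mem_grpOrbit_comm {x y : Fin n} : y ∈ grpOrbit L x ↔ x ∈ grpOrbit L y :=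
  ⟨fun ⟨g, hg, e⟩ => ⟨g⁻¹, inv_mem hg, by simp [← e]⟩,
    fun ⟨g, hg, e⟩ => ⟨g⁻¹, inv_mem hg, by simp [← e]⟩⟩

theorem mem_grpOrbit_trans {x y z : Fin n} (hxy : y ∈ grpOrbit L x) (hyz : z ∈ grpOrbit L y) :
    z ∈ grpOrbit L x :=
  let ⟨g, hg, e⟩ := hxy; let ⟨h, hh, e'⟩ := hyz; ⟨h * g, mul_mem hh hg, by simp [e, e']⟩

theorem grpOrbit_mapsTo {g : Perm (Fin n)} (hg : g ∈ Subgroup.closure {τ | τ ∈ L}) (v : Fin n) :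
    Set.MapsTo g (grpOrbit L v) (grpOrbit L v) :=
  fun _ ⟨h, hh, e⟩ => ⟨g * h, mul_mem hg hh, by simp [e]⟩

theorem mem_grpOrbit_of_apply_ne (hL : ∀ δ ∈ L, δ.IsThreeCycle) {δ : Perm (Fin n)} (hδ : δ ∈ L)
    {v x y : Fin n} (hx : x ∈ grpOrbit L v) (hδx : δ x ≠ x) (hδy : δ y ≠ y) :
    y ∈ grpOrbit L v := by
  obtain ⟨i, rfl⟩ := (hL δ hδ).isCycle.sameCycle hδx hδy
  exact grpOrbit_mapsTo (zpow_mem (Subgroup.subset_closure (k := {τ | τ ∈ L}) hδ) i) v hx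

noncomputable def factorsMoving (L : List (Perm (Fin n))) (X : Set (Fin n)) : List (Perm (Fin n)) :=
  L.filter fun δ => decide (∃ x ∈ X, δ x ≠ x)

theorem mem_factorsMoving {X : Set (Fin n)} {δ : Perm (Fin n)} :
    δ ∈ factorsMoving L X ↔ δ ∈ L ∧ ∃ x ∈ X, δ x ≠ x := by
  simp [factorsMoving]

theorem isTransFact3On_factorsMoving (hL : ∀ δ ∈ L, δ.IsThreeCycle) (v : Fin n) :
    IsTransFact3On (grpOrbit L v) L.prod (factorsMoving L (grpOrbit L v)) := by
  have hST : ∀ τ ∈ {τ | τ ∈ L}, τ ∈ {τ | τ ∈ factorsMoving L (grpOrbit L v)} ∨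
      ∀ z ∈ grpOrbit L v, τ z = z := fun τ hτ => by
    by_cases h : ∃ x ∈ grpOrbit L v, τ x ≠ x
    · exact .inl (mem_factorsMoving.2 ⟨hτ, h⟩)
    · simp only [not_exists, not_and, not_not] at h; exact .inr h
  refine ⟨fun δ hδ => ?_, fun y hy => ?_, fun x hx y hy => ?_⟩
  · obtain ⟨hδL, x, hx, hδx⟩ := mem_factorsMoving.1 hδ
    exact ⟨hL δ hδL, fun y hy => mem_grpOrbit_of_apply_ne hL hδL hx hδx hy⟩
  · refine prod_filter_apply (fun δ hδ => grpOrbit_mapsTo (Subgroup.subset_closure hδ) v)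
      (fun δ hδ hfalse z hz => ?_) hy
    by_contra h
    simp only [decide_eq_false_iff_not, not_exists, not_and, not_not] at hfalse
    exact h (hfalse z hz)
  · obtain ⟨g, hg, rfl⟩ := hx
    obtain ⟨g', hg', rfl⟩ := hy
    obtain ⟨h, hh, e⟩ := exists_mem_closure_apply_eq (fun g hg => grpOrbit_mapsTo hg v) hST
      (mul_mem hg' (inv_mem hg)) ⟨g, hg, rfl⟩
    exact ⟨h, hh, by simp [e]⟩

theorem mem_grpOrbit_of_sameCycle_prod {x y : Fin n} (h : L.prod.SameCycle x y) :
    y ∈ grpOrbit L x :=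
  let ⟨i, hi⟩ := h
  ⟨L.prod ^ i, zpow_mem (Subgroup.list_prod_mem _ fun _ hτ => Subgroup.subset_closure hτ) i, hi⟩

theorem isTransitiveFamily_of_forall_mem_grpOrbit {v : Fin n} (h : ∀ x, x ∈ grpOrbit L v) :
    IsTransitiveFamily L :=
  fun x y => mem_grpOrbit_trans (mem_grpOrbit_comm.1 (h x)) (h y)

theorem card_add_cycleCount_le_of_isTransFact3 {σ : Perm (Fin n)} (h : IsTransFact3 σ L) :
    n + cycleCount σ ≤ 2 * L.length + 2 := by
  obtain ⟨hL, rfl, htrans⟩ := h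
  have hone : Nat.card (Quotient (MulAction.orbitRel (Subgroup.closure {τ | τ ∈ L}) (Fin n))) ≤ 1 :=
    Finite.card_le_one_iff_subsingleton.2 ⟨fun q q' => Quotient.inductionOn₂ q q' fun x y =>
      Quotient.sound (orbitRel_closure_iff.2 (htrans x y))⟩
  have := card_add_cycleCount_prod_le hL
  rw [Fintype.card_fin] at this
  omega

theorem IsMinTransFact3.two_mul_length_add_two {σ : Perm (Fin n)} (h : IsMinTransFact3 σ L)
    (hn : 3 ≤ n) : 2 * L.length + 2 = n + cycleCount σ := by
  obtain ⟨m, hm⟩ := even_card_add_cycleCount_prod h.1.1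
  rw [h.1.2.1, Fintype.card_fin] at hm
  have hbridge := cycleCount_eq_cycleCountOn_add (Finset.subset_univ σ.support)
  rw [Finset.card_univ, Fintype.card_fin, Nat.sub_self, add_zero] at hbridge
  obtain ⟨F, hF, hFσ⟩ := exists_isThreeCycleFactorizationOn (m - 1) (Finset.subset_univ σ.support)
    (by simp; omega) (by simp; omega)
  have := h.2 F ⟨fun δ hδ => (hFσ.1 δ hδ).1, hFσ.2.1, fun x y =>
    orbitRel_closure_iff.1 (hFσ.2.2 x (Finset.mem_univ x) y (Finset.mem_univ y))⟩
  have := card_add_cycleCount_le_of_isTransFact3 h.1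
  omega

theorem IsMinTransFact3.not_isTransitiveFamily_tail {σ ω : Perm (Fin n)}
    (hmin : IsMinTransFact3 σ (ω :: L)) (hcount : cycleCount (ω⁻¹ * σ) = cycleCount σ) :
    ¬ IsTransitiveFamily L := fun htrans => by
  have hn := Finset.card_le_univ ω.support
  rw [(hmin.1.1 ω (.head _)).card_support, Fintype.card_fin] at hn
  have hlen := hmin.two_mul_length_add_two hn
  have := card_add_cycleCount_le_of_isTransFact3 (σ := ω⁻¹ * σ)
    ⟨fun δ hδ => hmin.1.1 δ (.tail _ hδ), by rw [← hmin.1.2.1, List.prod_cons,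
      inv_mul_cancel_left], htrans⟩
  simp only [List.length_cons] at hlen
  omega

theorem mem_grpOrbit_or_mem_grpOrbit {a b c : Fin n}
    (htrans : IsTransitiveFamily (swap a b * swap b c :: L)) (hbc : b ∈ grpOrbit L c) (x : Fin n) :
    x ∈ grpOrbit L c ∨ x ∈ grpOrbit L a := by
  set s := MulAction.orbitRel (Subgroup.closure {τ | τ ∈ L}) (Fin n)
  obtain ⟨g, hg, hgx⟩ := htrans c x
  have hrel := orbitRel_closure_cons_swap_mul_swap_le L a b c (orbitRel_closure_iff.2 ⟨g, hg, hgx⟩)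
  rw [glue_eq_self (s := s) (s.symm (mem_grpOrbit_iff.1 hbc))] at hrel
  simp only [mem_grpOrbit_iff]
  rcases hrel with h | ⟨-, h | h⟩
  exacts [.inl h, .inr (s.symm h), .inl (s.trans (mem_grpOrbit_iff.1 hbc) (s.symm h))]

variable {v w : Fin n}

theorem notMem_grpOrbit_of_mem (hvw : w ∉ grpOrbit L v) {x : Fin n} (hx : x ∈ grpOrbit L v) :
    x ∉ grpOrbit L w := by
  set s := MulAction.orbitRel (Subgroup.closure {τ | τ ∈ L}) (Fin n)
  simp only [mem_grpOrbit_iff] at *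
  exact fun hw => hvw (s.trans hx (s.symm hw))

theorem length_factorsMoving_add (hL : ∀ δ ∈ L, δ.IsThreeCycle) (hvw : w ∉ grpOrbit L v)
    (hcover : ∀ x, x ∈ grpOrbit L v ∨ x ∈ grpOrbit L w) :
    (factorsMoving L (grpOrbit L v)).length + (factorsMoving L (grpOrbit L w)).length =
      L.length := by
  have hw : factorsMoving L (grpOrbit L w) =
      L.filter fun δ => !decide (∃ x ∈ grpOrbit L v, δ x ≠ x) := by
    refine List.filter_congr fun δ hδ => ?_
    rw [← decide_not, decide_eq_decide]
    refine ⟨fun ⟨x, hxw, hx⟩ ⟨y, hyv, hy⟩ =>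
      notMem_grpOrbit_of_mem hvw (mem_grpOrbit_of_apply_ne hL hδ hyv hy hx) hxw, fun h => ?_⟩
    obtain ⟨z, hz, -⟩ := (hL δ hδ).isCycle
    exact (hcover z).elim (fun hzv => absurd ⟨z, hzv, hz⟩ h) fun hzw => ⟨z, hzw, hz⟩
  rw [hw, factorsMoving]
  exact (List.length_eq_length_filter_add _).symm

theorem prod_append_factorsMoving (hL : ∀ δ ∈ L, δ.IsThreeCycle) (hvw : w ∉ grpOrbit L v)
    (hcover : ∀ x, x ∈ grpOrbit L v ∨ x ∈ grpOrbit L w) {M : List (Perm (Fin n))}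
    (hM : IsTransFact3On (grpOrbit L v) L.prod M) :
    (M ++ factorsMoving L (grpOrbit L w)).prod = L.prod := by
  refine Equiv.ext fun x => ?_
  rw [List.prod_append, mul_apply]
  rcases hcover x with hx | hx
  · rw [prod_apply_eq_self (L := factorsMoving L (grpOrbit L w)) fun δ hδ => by_contra fun h => ?_,
      hM.2.1 x hx]
    obtain ⟨hδL, y, hy, hδy⟩ := mem_factorsMoving.1 hδ
    exact notMem_grpOrbit_of_mem hvw hx (mem_grpOrbit_of_apply_ne hL hδL hy hδy h)
  · rw [(isTransFact3On_factorsMoving hL w).2.1 x hx]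
    have hLx : L.prod x ∈ grpOrbit L w :=
      grpOrbit_mapsTo (Subgroup.list_prod_mem _ fun τ hτ => Subgroup.subset_closure hτ) w hx
    exact prod_apply_eq_self fun δ hδ => by_contra fun h =>
      notMem_grpOrbit_of_mem hvw ((hM.1 δ hδ).2 _ h) hLx

theorem isTransitiveFamily_cons_append_factorsMoving (hL : ∀ δ ∈ L, δ.IsThreeCycle)
    (hcover : ∀ x, x ∈ grpOrbit L v ∨ x ∈ grpOrbit L w) {M : List (Perm (Fin n))}
    (hM : IsTransFact3On (grpOrbit L v) L.prod M) {ω : Perm (Fin n)} {a : Fin n}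
    (ha : a ∈ grpOrbit L v) (hωa : ω a ∈ grpOrbit L w) :
    IsTransitiveFamily (ω :: (M ++ factorsMoving L (grpOrbit L w))) := by
  set N := ω :: (M ++ factorsMoving L (grpOrbit L w))
  set s := MulAction.orbitRel (Subgroup.closure {τ | τ ∈ N}) (Fin n)
  have hmono : ∀ {K : List (Perm (Fin n))}, (∀ τ ∈ K, τ ∈ N) →
      ∀ {x y}, (∃ g ∈ Subgroup.closure {τ | τ ∈ K}, g x = y) → s x y :=
    fun hK _ _ h => orbitRel_closure_mono hK (orbitRel_closure_iff.2 h)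
  have hreach : ∀ x, s a x := fun x => (hcover x).elim
    (fun hx => hmono (fun τ hτ => .tail _ (List.mem_append_left _ hτ)) (hM.2.2 a ha x hx))
    (fun hx => s.trans (orbitRel_closure_iff.2 ⟨ω, Subgroup.subset_closure (.head _), rfl⟩)
      (hmono (fun τ hτ => .tail _ (List.mem_append_right _ hτ))
        ((isTransFact3On_factorsMoving hL w).2.2 _ hωa x hx)))
  exact fun x y => orbitRel_closure_iff.1 (s.trans (s.symm (hreach x)) (hreach y))

theorem IsMinTransFact3.isMinTransFact3On_factorsMoving {σ ω : Perm (Fin n)}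
    (hmin : IsMinTransFact3 σ (ω :: L)) (hvw : w ∉ grpOrbit L v)
    (hcover : ∀ x, x ∈ grpOrbit L v ∨ x ∈ grpOrbit L w) {a : Fin n} (ha : a ∈ grpOrbit L v)
    (hωa : ω a ∈ grpOrbit L w) :
    IsMinTransFact3On (grpOrbit L v) (ω⁻¹ * σ) (factorsMoving L (grpOrbit L v)) := by
  obtain ⟨⟨h3, hprod, -⟩, hmin⟩ := hmin
  have hL : ∀ δ ∈ L, δ.IsThreeCycle := fun δ hδ => h3 δ (.tail _ hδ)
  rw [← hprod, List.prod_cons, inv_mul_cancel_left]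
  refine ⟨isTransFact3On_factorsMoving hL v, fun M hM => ?_⟩
  have hN : IsTransFact3 σ (ω :: (M ++ factorsMoving L (grpOrbit L w))) := by
    refine ⟨fun δ hδ => ?_, ?_, isTransitiveFamily_cons_append_factorsMoving hL hcover hM ha hωa⟩
    · rcases List.mem_cons.1 hδ with rfl | hδ
      · exact h3 δ (.head _)
      rcases List.mem_append.1 hδ with hδ | hδ
      exacts [(hM.1 δ hδ).1, hL δ (mem_factorsMoving.1 hδ).1]
    · rw [← hprod, List.prod_cons, List.prod_cons, prod_append_factorsMoving hL hvw hcover hM]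
  have hlen := hmin _ hN
  have hsplit := length_factorsMoving_add hL hvw hcover
  simp only [List.length_cons, List.length_append] at hlen
  omega

end Orbits

theorem min_threeCycle_factorization_mixed_case_general
    (n : ℕ) (σ ω : Perm (Fin n)) (L : List (Perm (Fin n))) (j₁ j₂ j₃ : Fin n)
    (h13 : j₁ ≠ j₃) (h23 : j₂ ≠ j₃)
    (hω : ω = Equiv.swap j₃ j₂ * Equiv.swap j₂ j₁)
    (hmin : IsMinTransFact3 σ (ω :: L))
    (hc23 : σ.SameCycle j₂ j₃) (hc12 : ¬ σ.SameCycle j₁ j₂) :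
    ((ω⁻¹ * σ).SameCycle j₁ j₂ ∧ ¬ (ω⁻¹ * σ).SameCycle j₁ j₃ ∧
      ¬ (ω⁻¹ * σ).SameCycle j₂ j₃) ∧
    (∀ x : Fin n, x ∈ grpOrbit L j₁ ∨ x ∈ grpOrbit L j₃) ∧
    (j₂ ∈ grpOrbit L j₁ ∧ j₃ ∉ grpOrbit L j₁) ∧
    (∀ v ∈ ({j₁, j₃} : Set (Fin n)),
      IsMinTransFact3On (grpOrbit L v) (ω⁻¹ * σ)
        (L.filter fun δ => decide (∃ x ∈ grpOrbit L v, δ x ≠ x))) := by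
  have hσ' : ω⁻¹ * σ = swap j₂ j₁ * (swap j₃ j₂ * σ) := by simp [hω, mul_assoc]
  have hprod : ω⁻¹ * σ = L.prod := by rw [← hmin.1.2.1, List.prod_cons, inv_mul_cancel_left]
  obtain ⟨hcycles, hcount⟩ := sameCycle_swap_mul_swap_mul h23 hc23 hc12
  rw [← hσ'] at hcycles hcount
  have hj₂ : j₂ ∈ grpOrbit L j₁ := mem_grpOrbit_of_sameCycle_prod (hprod ▸ hcycles.1)
  have hcover := mem_grpOrbit_or_mem_grpOrbit (hω ▸ hmin.1.2.2) hj₂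
  -- `L` would be a transitive factorization of `ω⁻¹ * σ`, which has as many cycles as `σ`
  have hj₃ : j₃ ∉ grpOrbit L j₁ := fun hj₃ => hmin.not_isTransitiveFamily_tail hcount
    (isTransitiveFamily_of_forall_mem_grpOrbit fun x => (hcover x).elim id (mem_grpOrbit_trans hj₃))
  refine ⟨hcycles, hcover, ⟨hj₂, hj₃⟩, ?_⟩
  rintro v (rfl | rfl)
  · exact hmin.isMinTransFact3On_factorsMoving hj₃ hcover (mem_grpOrbit_self v)
      (by simpa [hω] using mem_grpOrbit_self j₃)
  · exact hmin.isMinTransFact3On_factorsMoving (mt mem_grpOrbit_comm.1 hj₃)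
      (fun x => (hcover x).symm) (mem_grpOrbit_self v)
      (by simpa [hω, swap_apply_of_ne_of_ne h23.symm h13.symm] using hj₂)

/-- Case (2) of Lemma 5.2: if the first factor `δ₁ = (j₃ j₂ j₁)` of a minimal transitive
factorization of `σ` into 3-cycles is such that `j₂, j₃` lie in a common cycle of `σ` and
`j₁` in a different one, then in `σ' = δ₁⁻¹σ` the points `j₁, j₂` share a cycle and `j₃`
lies in a different one; the subgroup generated by the remaining factors has exactly two
orbits, one containing `j₁` and `j₂` and the other containing `j₃`; and on each of the two
orbits the sub-tuple of factors moving a point of that orbit is a minimal transitive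
factorization of the restriction of `σ'`. -/
theorem min_threeCycle_factorization_mixed_case
    (n : ℕ) (σ ω : Perm (Fin n)) (L : List (Perm (Fin n))) (j₁ j₂ j₃ : Fin n)
    (h12 : j₁ ≠ j₂) (h13 : j₁ ≠ j₃) (h23 : j₂ ≠ j₃)
    (hω : ω = Equiv.swap j₃ j₂ * Equiv.swap j₂ j₁)
    (hmin : IsMinTransFact3 σ (ω :: L))
    (hc23 : σ.SameCycle j₂ j₃) (hc12 : ¬ σ.SameCycle j₁ j₂) :
    ((ω⁻¹ * σ).SameCycle j₁ j₂ ∧ ¬ (ω⁻¹ * σ).SameCycle j₁ j₃ ∧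
      ¬ (ω⁻¹ * σ).SameCycle j₂ j₃) ∧
    (∀ x : Fin n, x ∈ grpOrbit L j₁ ∨ x ∈ grpOrbit L j₃) ∧
    (j₂ ∈ grpOrbit L j₁ ∧ j₃ ∉ grpOrbit L j₁) ∧
    (∀ v ∈ ({j₁, j₃} : Set (Fin n)),
      IsMinTransFact3On (grpOrbit L v) (ω⁻¹ * σ)
        (L.filter fun δ => decide (∃ x ∈ grpOrbit L v, δ x ≠ x))) :=
  min_threeCycle_factorization_mixed_case_general n σ ω L j₁ j₂ j₃ h13 h23 hω hmin hc23 hc12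
end

section
/- Let (δ₁,…,δ_k) be a minimal transitive factorization of σ ∈ S_n into 3-cycles, write δ₁ = (j₃ j₂ j₁) and σ' = δ₂⋯δ_k = δ₁⁻¹σ. Suppose j₁, j₂, j₃ lie in three pairwise distinct cycles of σ. Then the subgroup generated by {δ₂,…,δ_k} still acts transitively on {1,…,n}, and j₁, j₂, j₃ all lie in one common cycle of σ'. -/
open Equiv

/-!
Multiplying `σ` on the left by `δ₁⁻¹ = (j₁ j₂ j₃)` only redirects the arrows of `σ` that enter
`j₁, j₂, j₃`: the arrow into `j₁` now ends at `j₂`, the one into `j₂` at `j₃`, the one into `j₃`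
at `j₁`. As the three points lie on three different cycles of `σ`, walking along the cycle of
`j₁` leads to `j₂`, then to `j₃`, so the three cycles are fused into one cycle of `σ'`.
Consequently `δ₁` moves every point within its `σ'`-cycle, i.e. within an orbit of
`⟨δ₂, …, δ_k⟩ ∋ σ'`; so the orbits of this subgroup are unions of orbits of
`⟨δ₁, …, δ_k⟩`, and transitivity survives removing `δ₁`.
-/

namespace Equiv.Perm

variable {α : Type*}

theorem sameCycle_mul_apply_of_fixes_cycle [Finite α] {σ π : Perm α} {j : α}
    (hπ : ∀ x, σ.SameCycle j x → x ≠ j → π x = x) : (π * σ).SameCycle j (π j) := by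
  -- along the `σ`-cycle of `j`, `π * σ` follows `σ` until the step back into `j`,
  -- which it redirects to `π j`
  have hwalk : ∀ m : ℕ, (π * σ).SameCycle j ((σ ^ m) j) ∨ (π * σ).SameCycle j (π j) := by
    intro m
    induction m with
    | zero => exact Or.inl SameCycle.rfl
    | succ m ih =>
      refine ih.elim (fun h => ?_) Or.inr
      have hstep : (π * σ) ((σ ^ m) j) = π ((σ ^ (m + 1)) j) := by
        rw [pow_succ', Perm.mul_apply, Perm.mul_apply]
      rw [← sameCycle_apply_right, hstep] at h
      by_cases hj : (σ ^ (m + 1)) j = j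
      · rw [hj] at h; exact Or.inr h
      · rw [hπ _ SameCycle.rfl.pow_right hj] at h; exact Or.inl h
  obtain ⟨m, hm⟩ := (SameCycle.rfl.symm_apply_right : σ.SameCycle j (σ⁻¹ j)).exists_nat_pow_eq
  refine (hwalk m).elim (fun h => ?_) id
  rw [hm, ← sameCycle_apply_right, Perm.mul_apply] at h
  rwa [apply_symm_apply] at h

theorem sameCycle_inv_mul_of_apply_eq [Finite α] {σ ω : Perm α} {a b c : α} (hb : ω b = a)
    (hfix : ∀ x, x ≠ a → x ≠ b → x ≠ c → ω x = x) (hab : ¬σ.SameCycle a b)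
    (hac : ¬σ.SameCycle a c) : (ω⁻¹ * σ).SameCycle a b := by
  have h := sameCycle_mul_apply_of_fixes_cycle (π := ω⁻¹) fun x hx hxa =>
    inv_eq_iff_eq.2 (hfix x hxa (fun h => hab (h ▸ hx)) (fun h => hac (h ▸ hx))).symm
  rwa [inv_eq_iff_eq.2 hb.symm] at h

def orbitPreserving (H : Subgroup (Perm α)) : Subgroup (Perm α) where
  carrier := {g | ∀ x, ∃ h ∈ H, h x = g x}
  one_mem' x := ⟨1, H.one_mem, rfl⟩
  mul_mem' {a b} ha hb x := by
    obtain ⟨h₂, hh₂, e₂⟩ := hb x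
    obtain ⟨h₁, hh₁, e₁⟩ := ha (b x)
    exact ⟨h₁ * h₂, H.mul_mem hh₁ hh₂, by rw [Perm.mul_apply, Perm.mul_apply, e₂, e₁]⟩
  inv_mem' {a} ha x := by
    obtain ⟨h, hh, e⟩ := ha (a⁻¹ x)
    exact ⟨h⁻¹, H.inv_mem hh, by rw [inv_eq_iff_eq, e]; exact (a.apply_symm_apply x).symm⟩

theorem le_orbitPreserving (H : Subgroup (Perm α)) : H ≤ orbitPreserving H :=
  fun g hg _ => ⟨g, hg, rfl⟩

theorem mem_orbitPreserving_of_sameCycle {H : Subgroup (Perm α)} {ρ ω : Perm α} (hρ : ρ ∈ H)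
    (hω : ∀ x, ρ.SameCycle x (ω x)) : ω ∈ orbitPreserving H := fun x => by
  obtain ⟨i, hi⟩ := hω x
  exact ⟨ρ ^ i, H.zpow_mem hρ i, hi⟩

end Equiv.Perm

open Equiv.Perm in
theorem IsTransitiveFamily.of_cons {n : ℕ} {ω : Perm (Fin n)} {L : List (Perm (Fin n))}
    (h : IsTransitiveFamily (ω :: L)) (hω : ∀ x, L.prod.SameCycle x (ω x)) :
    IsTransitiveFamily L := by
  set H := Subgroup.closure {τ | τ ∈ L}
  have hle : Subgroup.closure {τ | τ ∈ ω :: L} ≤ orbitPreserving H := by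
    rw [Subgroup.closure_le]
    intro τ hτ
    rcases List.mem_cons.1 hτ with rfl | hτ
    · exact mem_orbitPreserving_of_sameCycle
        (H.list_prod_mem fun τ hτ => Subgroup.subset_closure hτ) hω
    · exact le_orbitPreserving H (Subgroup.subset_closure hτ)
  intro x y
  obtain ⟨g, hg, rfl⟩ := h x y
  exact hle hg x

/-- Case (3) of Lemma 5.2: if the first factor `δ₁ = (j₃ j₂ j₁)` of a minimal transitive
factorization of `σ` into 3-cycles has its three points in three pairwise distinct cycles
of `σ`, then the subgroup generated by the remaining factors still acts transitively on
`{1,…,n}` and `j₁, j₂, j₃` all lie in one common cycle of `σ' = δ₁⁻¹σ`. -/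
theorem min_threeCycle_factorization_join_case
    (n : ℕ) (σ ω : Perm (Fin n)) (L : List (Perm (Fin n))) (j₁ j₂ j₃ : Fin n)
    (h12 : j₁ ≠ j₂) (h13 : j₁ ≠ j₃) (h23 : j₂ ≠ j₃)
    (hω : ω = Equiv.swap j₃ j₂ * Equiv.swap j₂ j₁)
    (hmin : IsMinTransFact3 σ (ω :: L))
    (hc12 : ¬ σ.SameCycle j₁ j₂) (hc13 : ¬ σ.SameCycle j₁ j₃)
    (hc23 : ¬ σ.SameCycle j₂ j₃) :
    IsTransitiveFamily L ∧
    (ω⁻¹ * σ).SameCycle j₁ j₂ ∧ (ω⁻¹ * σ).SameCycle j₁ j₃ ∧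
    (ω⁻¹ * σ).SameCycle j₂ j₃ := by
  obtain ⟨⟨-, hprod, htrans⟩, -⟩ := hmin
  have hσ' : L.prod = ω⁻¹ * σ := eq_inv_mul_of_mul_eq (by rwa [List.prod_cons] at hprod)
  have hfix : ∀ x, x ≠ j₁ → x ≠ j₂ → x ≠ j₃ → ω x = x := fun x h₁ h₂ h₃ => by
    rw [hω, Perm.mul_apply, swap_apply_of_ne_of_ne h₂ h₁, swap_apply_of_ne_of_ne h₃ h₂]
  have hω₁ : ω j₁ = j₃ := by simp [hω]
  have hω₂ : ω j₂ = j₁ := by simp [hω, swap_apply_of_ne_of_ne h13 h12]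
  have hω₃ : ω j₃ = j₂ := by simp [hω, swap_apply_of_ne_of_ne h23.symm h13.symm]
  have s12 := Perm.sameCycle_inv_mul_of_apply_eq hω₂ hfix hc12 hc13
  have s23 := Perm.sameCycle_inv_mul_of_apply_eq hω₃ (fun x h₂ h₃ h₁ => hfix x h₁ h₂ h₃) hc23
    fun h => hc12 h.symm
  have s31 := Perm.sameCycle_inv_mul_of_apply_eq hω₁ (fun x h₃ h₁ h₂ => hfix x h₁ h₂ h₃)
    (fun h => hc13 h.symm) fun h => hc23 h.symm
  refine ⟨htrans.of_cons fun x => hσ' ▸ ?_, s12, s31.symm, s23⟩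
  rcases eq_or_ne x j₁ with rfl | h₁
  · rw [hω₁]; exact s31.symm
  rcases eq_or_ne x j₂ with rfl | h₂
  · rw [hω₂]; exact s12.symm
  rcases eq_or_ne x j₃ with rfl | h₃
  · rw [hω₃]; exact s23.symm
  · rw [hfix x h₁ h₂ h₃]
end
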